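/- arXiv:2602.08127 — 7 statements merged into one kernel-verified Lean document; each statement's English description precedes it below -/
import Mathlib

section
/- Let (x_n), (α_n), (β_n), (γ_n) be sequences of nonnegative reals satisfying x_{n+1} ≤ (1+α_n)·x_n − β_n + γ_n for all n. If the infinite product ∏(1+α_i) converges to a finite value and ∑γ_i < ∞, then (x_n) converges and ∑β_i < ∞. -/
open Filter

theorem stmt_0 (x α β γ : ℕ → ℝ)
    (hx : ∀ n, 0 ≤ x n) (hα : ∀ n, 0 ≤ α n) (hβ : ∀ n, 0 ≤ β n) (hγ : ∀ n, 0 ≤ γ n)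
    (hrec : ∀ n, x (n + 1) ≤ (1 + α n) * x n - β n + γ n)
    (hprod : ∃ P : ℝ, Tendsto (fun n => ∏ i ∈ Finset.range n, (1 + α i)) atTop (nhds P))
    (hγsum : Summable γ) :
    (∃ l : ℝ, Tendsto x atTop (nhds l)) ∧ Summable β := by
  obtain ⟨P, hP⟩ := hprod
  set Q : ℕ → ℝ := fun n => ∏ i ∈ Finset.range n, (1 + α i) with hQdef
  have hQ1 : ∀ n, 1 ≤ Q n := by
    intro n
    simp only [hQdef]
    induction n with
    | zero => simp
    | succ k ih =>
      rw [Finset.prod_range_succ]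
      nlinarith [hα k]
  have hQpos : ∀ n, 0 < Q n := fun n => lt_of_lt_of_le one_pos (hQ1 n)
  have hQsucc : ∀ n, Q (n + 1) = Q n * (1 + α n) := fun n => Finset.prod_range_succ _ n
  have hQmono : Monotone Q := by
    apply monotone_nat_of_le_succ
    intro n
    rw [hQsucc n]
    nlinarith [hα n, hQpos n]
  have hQle : ∀ n, Q n ≤ P := fun n => Monotone.ge_of_tendsto hQmono hP n
  have hP1 : (1:ℝ) ≤ P := ge_of_tendsto' hP hQ1
  set u : ℕ → ℝ := fun n => x n / Q n with hu
  have hu0 : ∀ n, 0 ≤ u n := fun n => div_nonneg (hx n) (hQpos n).le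
  set S : ℝ := ∑' i, γ i with hS
  set G : ℕ → ℝ := fun n => ∑ i ∈ Finset.range n, γ i with hG
  have hGle : ∀ n, G n ≤ S := fun n => Summable.sum_le_tsum _ (fun i _ => hγ i) hγsum
  -- key inequality
  have key : ∀ n, u (n + 1) + β n / Q (n + 1) ≤ u n + γ n := by
    intro n
    have hpos : (0:ℝ) < Q (n + 1) := hQpos (n + 1)
    have h1 : x (n + 1) + β n ≤ (1 + α n) * x n + γ n := by linarith [hrec n]
    have h2 : (x (n + 1) + β n) / Q (n + 1) ≤ ((1 + α n) * x n + γ n) / Q (n + 1) :=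
      (div_le_div_iff_of_pos_right hpos).mpr h1
    have e1 : (x (n + 1) + β n) / Q (n + 1) = u (n + 1) + β n / Q (n + 1) := add_div _ _ _
    have e2 : ((1 + α n) * x n + γ n) / Q (n + 1) = u n + γ n / Q (n + 1) := by
      have h1a : (1 + α n) ≠ 0 := ne_of_gt (by linarith [hα n])
      rw [hQsucc n, add_div, hu]
      have : (1 + α n) * x n / (Q n * (1 + α n)) = x n / Q n := by
        rw [mul_comm (Q n)]; exact mul_div_mul_left _ _ h1a
      rw [this]
    have e3 : γ n / Q (n + 1) ≤ γ n := div_le_self (hγ n) (hQ1 _)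
    rw [e1] at h2
    rw [e2] at h2
    linarith
  -- u (n+1) ≤ u n + γ n
  have hstep : ∀ n, u (n + 1) ≤ u n + γ n := by
    intro n
    have := key n
    have : 0 ≤ β n / Q (n + 1) := div_nonneg (hβ n) (hQpos _).le
    linarith [key n]
  set w : ℕ → ℝ := fun n => u n - G n with hw
  have hwanti : Antitone w := by
    apply antitone_nat_of_succ_le
    intro n
    have hGs : G (n + 1) = G n + γ n := Finset.sum_range_succ _ n
    simp only [hw]
    rw [hGs]
    linarith [hstep n]
  have hwbdd : ∀ n, -S ≤ w n := by
    intro n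
    simp only [hw]
    linarith [hu0 n, hGle n]
  have hwconv : Tendsto w atTop (nhds (⨅ n, w n)) := by
    apply tendsto_atTop_ciInf hwanti
    exact ⟨-S, fun y ⟨n, hn⟩ => hn ▸ hwbdd n⟩
  have hGconv : Tendsto G atTop (nhds S) := hγsum.hasSum.tendsto_sum_nat
  have huconv : Tendsto u atTop (nhds ((⨅ n, w n) + S)) := by
    have : u = fun n => w n + G n := by funext n; simp [hw]
    rw [this]
    exact hwconv.add hGconv
  have hxconv : Tendsto x atTop (nhds (((⨅ n, w n) + S) * P)) := by
    have : x = fun n => u n * Q n := by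
      funext n
      simp only [hu]
      exact (div_mul_cancel₀ _ (hQpos n).ne').symm
    rw [this]
    exact huconv.mul hP
  refine ⟨⟨_, hxconv⟩, ?_⟩
  -- summability of β
  apply summable_of_sum_range_le (c := P * (u 0 + S)) hβ
  intro n
  have hb : ∀ i, β i ≤ P * (β i / Q (i + 1)) := by
    intro i
    have h1 : β i / Q (i + 1) * Q (i + 1) = β i := div_mul_cancel₀ _ (hQpos _).ne'
    have h2 : β i / Q (i + 1) * Q (i + 1) ≤ β i / Q (i + 1) * P :=
      mul_le_mul_of_nonneg_left (hQle _) (div_nonneg (hβ i) (hQpos _).le)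
    rw [h1] at h2
    linarith
  calc ∑ i ∈ Finset.range n, β i ≤ ∑ i ∈ Finset.range n, P * (β i / Q (i + 1)) :=
        Finset.sum_le_sum fun i _ => hb i
    _ = P * ∑ i ∈ Finset.range n, β i / Q (i + 1) := by rw [Finset.mul_sum]
    _ ≤ P * (u 0 + S) := by
        apply mul_le_mul_of_nonneg_left _ (by linarith : (0:ℝ) ≤ P)
        have htel : ∑ i ∈ Finset.range n, β i / Q (i + 1) ≤ u 0 - u n + G n := by
          have step : ∀ i, β i / Q (i + 1) ≤ (u i - u (i + 1)) + γ i := by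
            intro i; linarith [key i]
          calc ∑ i ∈ Finset.range n, β i / Q (i + 1)
              ≤ ∑ i ∈ Finset.range n, ((u i - u (i + 1)) + γ i) :=
                Finset.sum_le_sum fun i _ => step i
            _ = (u 0 - u n) + G n := by
                rw [Finset.sum_add_distrib, Finset.sum_range_sub' u n]
        linarith [hu0 n, hGle n]
end

section
/- Let (x_n), (α_n), (β_n), (γ_n) be sequences of nonnegative reals satisfying x_{n+1} ≤ (1+α_n)·x_n − β_n + γ_n for all n. If K, L, M > 0 satisfy x_0 < K, ∏_{i=0}^∞(1+α_i) < L, and ∑_{i=0}^∞ γ_i < M, then ∑_{i=0}^∞ β_i < L·(K + M). -/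
open Filter

theorem stmt_1 (x α β γ : ℕ → ℝ) (K L M : ℝ)
    (hx : ∀ n, 0 ≤ x n) (hα : ∀ n, 0 ≤ α n) (hβ : ∀ n, 0 ≤ β n) (hγ : ∀ n, 0 ≤ γ n)
    (hrec : ∀ n, x (n + 1) ≤ (1 + α n) * x n - β n + γ n)
    (hK : 0 < K) (hL : 0 < L) (hM : 0 < M)
    (hx0 : x 0 < K)
    (hprod : ∃ P : ℝ, Tendsto (fun n => ∏ i ∈ Finset.range n, (1 + α i)) atTop (nhds P) ∧ P < L)
    (hγsum : Summable γ) (hγlt : ∑' n, γ n < M) :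
    Summable β ∧ ∑' n, β n < L * (K + M) := by
  obtain ⟨Pl, hPl, hPlL⟩ := hprod
  set P : ℕ → ℝ := fun n => ∏ i ∈ Finset.range n, (1 + α i) with hP
  have hP1 : ∀ n, 1 ≤ P n := by
    intro n
    induction n with
    | zero => simp [hP]
    | succ n ih =>
      have : P (n + 1) = P n * (1 + α n) := Finset.prod_range_succ _ _
      nlinarith [hα n]
  have hPmono : Monotone P := by
    apply monotone_nat_of_le_succ
    intro n
    have hs : P (n + 1) = P n * (1 + α n) := Finset.prod_range_succ _ _
    nlinarith [hα n, hP1 n]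
  have hPle : ∀ n, P n ≤ Pl := fun n => hPmono.ge_of_tendsto hPl n
  have hPL : ∀ n, P n < L := fun n => lt_of_le_of_lt (hPle n) hPlL
  -- key per-step inequality
  have key : ∀ n, β n ≤ L * (x n / P n - x (n + 1) / P (n + 1) + γ n) := by
    intro n
    have hsucc : P (n + 1) = P n * (1 + α n) := Finset.prod_range_succ _ _
    have ha : (1:ℝ) ≤ P n := hP1 n
    have hb : (1:ℝ) ≤ 1 + α n := by linarith [hα n]
    have hab : 0 < P (n + 1) := lt_of_lt_of_le one_pos (hP1 _)
    have hdiv : β n / P (n + 1) ≤ x n / P n - x (n + 1) / P (n + 1) + γ n := by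
      have h1 : x n / P n = ((1 + α n) * x n) / P (n + 1) := by
        rw [hsucc]; field_simp
      have h2 : β n / P (n + 1) ≤
          ((1 + α n) * x n - x (n + 1) + γ n) / P (n + 1) := by
        apply div_le_div_of_nonneg_right _ hab.le
        linarith [hrec n]
      have h3 : γ n / P (n + 1) ≤ γ n := div_le_self (hγ n) (hP1 _)
      calc β n / P (n + 1) ≤ ((1 + α n) * x n - x (n + 1) + γ n) / P (n + 1) := h2
        _ = x n / P n - x (n + 1) / P (n + 1) + γ n / P (n + 1) := by
            rw [h1]; ring
        _ ≤ x n / P n - x (n + 1) / P (n + 1) + γ n := by linarith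
    have hnn : 0 ≤ x n / P n - x (n + 1) / P (n + 1) + γ n :=
      le_trans (div_nonneg (hβ n) hab.le) hdiv
    calc β n = P (n + 1) * (β n / P (n + 1)) := by field_simp
      _ ≤ P (n + 1) * (x n / P n - x (n + 1) / P (n + 1) + γ n) :=
          mul_le_mul_of_nonneg_left hdiv hab.le
      _ ≤ L * (x n / P n - x (n + 1) / P (n + 1) + γ n) :=
          mul_le_mul_of_nonneg_right (hPL _).le hnn
  -- partial sum bound
  have hbound : ∀ N, ∑ n ∈ Finset.range N, β n ≤ L * (x 0 + ∑' n, γ n) := by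
    intro N
    have htel : ∑ n ∈ Finset.range N, (x n / P n - x (n + 1) / P (n + 1))
        = x 0 / P 0 - x N / P N := Finset.sum_range_sub' (fun n => x n / P n) N
    have hsum : ∑ n ∈ Finset.range N, β n ≤
        L * ((x 0 / P 0 - x N / P N) + ∑ n ∈ Finset.range N, γ n) := by
      calc ∑ n ∈ Finset.range N, β n
          ≤ ∑ n ∈ Finset.range N, L * (x n / P n - x (n + 1) / P (n + 1) + γ n) :=
            Finset.sum_le_sum (fun n _ => key n)
        _ = L * ((x 0 / P 0 - x N / P N) + ∑ n ∈ Finset.range N, γ n) := by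
            rw [← htel, ← Finset.mul_sum, ← Finset.sum_add_distrib]
    have hP0 : P 0 = 1 := Finset.prod_range_zero _
    have hxN : 0 ≤ x N / P N := div_nonneg (hx N) (le_trans zero_le_one (hP1 N))
    have hγN : ∑ n ∈ Finset.range N, γ n ≤ ∑' n, γ n :=
      Summable.sum_le_tsum _ (fun i _ => hγ i) hγsum
    have : (x 0 / P 0 - x N / P N) + ∑ n ∈ Finset.range N, γ n ≤ x 0 + ∑' n, γ n := by
      rw [hP0]; simp only [div_one]; linarith
    calc ∑ n ∈ Finset.range N, β n ≤ _ := hsum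
      _ ≤ L * (x 0 + ∑' n, γ n) := mul_le_mul_of_nonneg_left this hL.le
  have hβsum : Summable β := summable_of_sum_range_le hβ hbound
  refine ⟨hβsum, ?_⟩
  have h1 : ∑' n, β n ≤ L * (x 0 + ∑' n, γ n) := Summable.tsum_le_of_sum_range_le hβsum hbound
  have h2 : L * (x 0 + ∑' n, γ n) < L * (K + M) :=
    mul_lt_mul_of_pos_left (add_lt_add hx0 hγlt) hL
  linarith
end

section
/- Suppose (u_n), (v_n) are sequences of nonnegative reals, L > 0 with ∑_{n=0}^∞ u_n·v_n < L, and θ : ℕ × (0,∞) → ℕ satisfies ∑_{n=k}^{θ(k,b)} u_n ≥ b for all b > 0 and k ∈ ℕ. Then for every ε > 0 and every N ∈ ℕ there exists n with N ≤ n ≤ θ(N, L/ε) such that v_n < ε. In particular liminf v_n = 0. -/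
open Filter

theorem stmt_2 (u v : ℕ → ℝ) (L : ℝ) (θ : ℕ → ℝ → ℕ)
    (hu : ∀ n, 0 ≤ u n) (hv : ∀ n, 0 ≤ v n) (hL : 0 < L)
    (hsum : Summable (fun n => u n * v n)) (hlt : ∑' n, u n * v n < L)
    (hθ : ∀ b : ℝ, 0 < b → ∀ k : ℕ, b ≤ ∑ n ∈ Finset.Icc k (θ k b), u n) :
    (∀ ε : ℝ, 0 < ε → ∀ N : ℕ, ∃ n, N ≤ n ∧ n ≤ θ N (L / ε) ∧ v n < ε) ∧
      Filter.liminf v atTop = 0 := by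
  have key : ∀ ε : ℝ, 0 < ε → ∀ N : ℕ, ∃ n, N ≤ n ∧ n ≤ θ N (L / ε) ∧ v n < ε := by
    intro ε hε N
    by_contra h
    push_neg at h
    have hεv : ∀ n ∈ Finset.Icc N (θ N (L / ε)), ε * u n ≤ u n * v n := by
      intro n hn
      rw [Finset.mem_Icc] at hn
      have := h n hn.1 hn.2
      calc ε * u n ≤ v n * u n := mul_le_mul_of_nonneg_right this (hu n)
        _ = u n * v n := mul_comm _ _
    have h1 : L ≤ ∑ n ∈ Finset.Icc N (θ N (L / ε)), u n * v n := by
      calc L = ε * (L / ε) := by field_simp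
        _ ≤ ε * ∑ n ∈ Finset.Icc N (θ N (L / ε)), u n :=
          mul_le_mul_of_nonneg_left (hθ (L / ε) (div_pos hL hε) N) hε.le
        _ = ∑ n ∈ Finset.Icc N (θ N (L / ε)), ε * u n := Finset.mul_sum _ _ _
        _ ≤ _ := Finset.sum_le_sum hεv
    have h2 : ∑ n ∈ Finset.Icc N (θ N (L / ε)), u n * v n ≤ ∑' n, u n * v n :=
      Summable.sum_le_tsum _ (fun n _ => mul_nonneg (hu n) (hv n)) hsum
    linarith
  refine ⟨key, ?_⟩
  have hfreq : ∀ ε : ℝ, 0 < ε → ∃ᶠ n in atTop, v n < ε := by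
    intro ε hε
    rw [frequently_atTop]
    intro N
    obtain ⟨n, hn, _, hvn⟩ := key ε hε N
    exact ⟨n, hn, hvn⟩
  have hcb : IsCoboundedUnder (· ≥ ·) atTop v := by
    refine ⟨1, fun a ha => ?_⟩
    obtain ⟨n, h1, hn⟩ := (hfreq 1 one_pos).and_eventually ha |>.exists
    simp only [Set.mem_setOf_eq, ge_iff_le] at hn
    linarith
  apply le_antisymm
  · by_contra hlim
    push_neg at hlim
    set ε := liminf v atTop with hεdef
    have hε : 0 < ε := hlim
    have := Filter.eventually_lt_of_lt_liminf (show ε / 2 < liminf v atTop by linarith)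
      ⟨0, by simp [le_def, hv]⟩
    obtain ⟨n, hn1, hn2⟩ := ((hfreq (ε/2) (by linarith)).and_eventually this).exists
    linarith
  · exact le_liminf_of_le hcb (Eventually.of_forall hv)
end

section
/- Let H be a real Hilbert space, Z ⊆ H nonempty, and (x_n) ⊆ H a bounded sequence such that ‖x_n − z‖ converges for every z ∈ Z. If every weak cluster point of (x_n) lies in Z, then (x_n) converges weakly to some point of Z. -/
/-!
By polarization, convergence of `‖x n - p‖` and `‖x n - q‖` for `p, q ∈ Z` makes `⟪x n, p - q⟫`
converge, so two weak cluster points `p, q ∈ Z` satisfy `⟪p, p - q⟫ = ⟪q, p - q⟫`, i.e. `p = q`.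
A bounded sequence in a Hilbert space has a weak cluster
point, and every subsequence does too; hence all of them lie in `Z`, coincide, and the whole
sequence converges weakly to that point.
-/

open Filter Topology TopologicalSpace
open scoped InnerProductSpace

section WeakConvergence

variable {H : Type*} [NormedAddCommGroup H] [InnerProductSpace ℝ H]

def WeakTendsto (u : ℕ → H) (p : H) : Prop :=
  ∀ y : H, Tendsto (fun n => ⟪u n, y⟫_ℝ) atTop (𝓝 ⟪p, y⟫_ℝ)

def IsWeakClusterPt (u : ℕ → H) (p : H) : Prop :=
  ∃ φ : ℕ → ℕ, StrictMono φ ∧ WeakTendsto (u ∘ φ) p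

theorem tendsto_inner_sub_of_tendsto_norm_sub {ι : Type*} {l : Filter ι} {u : ι → H} {p q : H}
    {A B : ℝ} (hp : Tendsto (fun i => ‖u i - p‖) l (𝓝 A))
    (hq : Tendsto (fun i => ‖u i - q‖) l (𝓝 B)) :
    Tendsto (fun i => ⟪u i, p - q⟫_ℝ) l (𝓝 ((B ^ 2 - A ^ 2 + ‖p‖ ^ 2 - ‖q‖ ^ 2) / 2)) := by
  have polarization : ∀ i,
      ⟪u i, p - q⟫_ℝ = (‖u i - q‖ ^ 2 - ‖u i - p‖ ^ 2 + ‖p‖ ^ 2 - ‖q‖ ^ 2) / 2 := fun i => by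
    rw [inner_sub_right, norm_sub_sq_real, norm_sub_sq_real]; ring
  simp_rw [polarization]
  exact ((((hq.pow 2).sub (hp.pow 2)).add_const _).sub_const _).div_const _

theorem IsWeakClusterPt.eq {u : ℕ → H} {p q : H} (hp : IsWeakClusterPt u p)
    (hq : IsWeakClusterPt u q) (hup : ∃ A, Tendsto (fun n => ‖u n - p‖) atTop (𝓝 A))
    (huq : ∃ B, Tendsto (fun n => ‖u n - q‖) atTop (𝓝 B)) : p = q := by
  obtain ⟨φ, hφ, hpφ⟩ := hp
  obtain ⟨ψ, hψ, hqψ⟩ := hq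
  obtain ⟨A, hA⟩ := hup
  obtain ⟨B, hB⟩ := huq
  have hlim := tendsto_inner_sub_of_tendsto_norm_sub hA hB
  have hp' := tendsto_nhds_unique (hpφ (p - q)) (hlim.comp hφ.tendsto_atTop)
  have hq' := tendsto_nhds_unique (hqψ (p - q)) (hlim.comp hψ.tendsto_atTop)
  rw [← sub_eq_zero, ← inner_self_eq_zero (𝕜 := ℝ), inner_sub_left, hp', hq', sub_self]

theorem exists_isWeakClusterPt_of_bounded [CompleteSpace H] {u : ℕ → H} {C : ℝ}
    (hC : ∀ n, ‖u n‖ ≤ C) : ∃ p, IsWeakClusterPt u p := by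
  -- Work in the closed span of the sequence: it is separable, so sequential Banach–Alaoglu
  -- applies to its dual, which Riesz identifies with the subspace itself.
  set M := (Submodule.span ℝ (Set.range u)).topologicalClosure
  have hu : ∀ n, u n ∈ M := fun n =>
    Submodule.le_topologicalClosure _ (Submodule.subset_span (Set.mem_range_self n))
  have : SeparableSpace M :=
    (Set.countable_range u).isSeparable.span.closure.separableSpace
  let f : ℕ → WeakDual ℝ M := fun n => InnerProductSpace.toDual ℝ M ⟨u n, hu n⟩
  have hf : ∀ n, f n ∈ WeakDual.toStrongDual ⁻¹' Metric.closedBall 0 C := fun n =>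
    mem_closedBall_zero_iff.2 (((InnerProductSpace.toDual ℝ M).norm_map _).trans_le (hC n))
  obtain ⟨g, -, φ, hφ, hfg⟩ := WeakDual.isSeqCompact_closedBall ℝ M 0 C hf
  refine ⟨(InnerProductSpace.toDual ℝ M).symm (WeakDual.toStrongDual g), φ, hφ, fun y => ?_⟩
  have hfy : ∀ n, ⟪u n, y⟫_ℝ = f n (M.orthogonalProjectionOnto y) := fun n =>
    (Submodule.inner_orthogonalProjectionOnto_eq_of_mem_left ⟨u n, hu n⟩ y).symm
  rw [← Submodule.inner_orthogonalProjectionOnto_eq_of_mem_left,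
    InnerProductSpace.toDual_symm_apply]
  simp only [Function.comp_apply, hfy]
  exact ((WeakDual.eval_continuous _).tendsto _).comp hfg

theorem IsWeakClusterPt.of_comp {u : ℕ → H} {p : H} {φ : ℕ → ℕ} (hφ : StrictMono φ)
    (hp : IsWeakClusterPt (u ∘ φ) p) : IsWeakClusterPt u p :=
  let ⟨ψ, hψ, hpψ⟩ := hp
  ⟨φ ∘ ψ, hφ.comp hψ, hpψ⟩

theorem weakTendsto_of_isWeakClusterPt_unique [CompleteSpace H] {u : ℕ → H} {C : ℝ}
    (hC : ∀ n, ‖u n‖ ≤ C) {p : H} (hunique : ∀ q, IsWeakClusterPt u q → q = p) :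
    WeakTendsto u p := fun y => tendsto_of_subseq_tendsto fun ns hns => by
  obtain ⟨ms, -, hms⟩ := strictMono_subseq_of_tendsto_atTop hns
  obtain ⟨q, ψ, hψ, hq⟩ := exists_isWeakClusterPt_of_bounded fun k => hC (ns (ms k))
  obtain rfl := hunique q (IsWeakClusterPt.of_comp hms ⟨ψ, hψ, hq⟩)
  exact ⟨ms ∘ ψ, hq y⟩

end WeakConvergence

theorem stmt_5_general {H : Type*} [NormedAddCommGroup H] [InnerProductSpace ℝ H] [CompleteSpace H]
    (Z : Set H) (x : ℕ → H)
    (hbdd : ∃ C : ℝ, ∀ n, ‖x n‖ ≤ C)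
    (hconv : ∀ z ∈ Z, ∃ l : ℝ, Tendsto (fun n => ‖x n - z‖) atTop (nhds l))
    (hclus : ∀ p : H,
      (∃ φ : ℕ → ℕ, StrictMono φ ∧
        ∀ y : H, Tendsto (fun k => (inner ℝ (x (φ k)) y : ℝ)) atTop (nhds (inner ℝ p y : ℝ)))
      → p ∈ Z) :
    ∃ p ∈ Z, ∀ y : H, Tendsto (fun n => (inner ℝ (x n) y : ℝ)) atTop (nhds (inner ℝ p y : ℝ)) := by
  obtain ⟨C, hC⟩ := hbdd
  obtain ⟨p, hp⟩ := exists_isWeakClusterPt_of_bounded hC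
  have hpZ : p ∈ Z := hclus p hp
  refine ⟨p, hpZ, weakTendsto_of_isWeakClusterPt_unique hC fun q hq => ?_⟩
  exact (hp.eq hq (hconv p hpZ) (hconv q (hclus q hq))).symm

theorem stmt_5 {H : Type*} [NormedAddCommGroup H] [InnerProductSpace ℝ H] [CompleteSpace H]
    (Z : Set H) (hZ : Z.Nonempty) (x : ℕ → H)
    (hbdd : ∃ C : ℝ, ∀ n, ‖x n‖ ≤ C)
    (hconv : ∀ z ∈ Z, ∃ l : ℝ, Tendsto (fun n => ‖x n - z‖) atTop (nhds l))
    (hclus : ∀ p : H,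
      (∃ φ : ℕ → ℕ, StrictMono φ ∧
        ∀ y : H, Tendsto (fun k => (inner ℝ (x (φ k)) y : ℝ)) atTop (nhds (inner ℝ p y : ℝ)))
      → p ∈ Z) :
    ∃ p ∈ Z, ∀ y : H, Tendsto (fun n => (inner ℝ (x n) y : ℝ)) atTop (nhds (inner ℝ p y : ℝ)) :=
  stmt_5_general Z x hbdd hconv hclus
end

section
/- Let g : T × X → ℝ be a Carathéodory function on a measurable space (T,𝒯) and a complete separable metric space X, with m(t) := inf_x g(t,x) finite for all t. Then the argmin map M(t) := {x ∈ X : g(t,x) = m(t)} has measurable graph, i.e. {(t,x) : g(t,x) = m(t)} ∈ 𝒯 ⊗ ℬ(X). -/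
open TopologicalSpace

theorem stmt_8 {T : Type*} [MeasurableSpace T]
    {X : Type*} [MetricSpace X] [TopologicalSpace.SeparableSpace X] [CompleteSpace X]
    [MeasurableSpace X] [BorelSpace X] [Nonempty X]
    (g : T → X → ℝ)
    (hmeas : ∀ x : X, Measurable (fun t => g t x))
    (hcont : ∀ t : T, Continuous (g t))
    (hbdd : ∀ t : T, BddBelow (Set.range (g t))) :
    MeasurableSet {p : T × X | g p.1 p.2 = ⨅ x : X, g p.1 x} := by
  -- joint measurability of g
  have hg : Measurable (fun p : T × X => g p.1 p.2) := by
    have : Measurable (Function.uncurry fun x t => g t x) :=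
      MeasureTheory.measurable_uncurry_of_continuous_of_measurable
        (fun t => (hcont t)) hmeas
    exact this.comp measurable_swap
  -- measurability of m
  set u : ℕ → X := denseSeq X with hu
  have hdense : DenseRange u := denseRange_denseSeq X
  have hm_eq : ∀ t : T, (⨅ x : X, g t x) = ⨅ n : ℕ, g t (u n) := by
    intro t
    apply le_antisymm
    · exact le_ciInf fun n => ciInf_le (hbdd t) (u n)
    · apply le_ciInf
      intro x
      haveI hne : (nhdsWithin x (Set.range u)).NeBot :=
        mem_closure_iff_nhdsWithin_neBot.mp (hdense x)
      have htend : Filter.Tendsto (fun y => g t y) (nhdsWithin x (Set.range u)) (nhds (g t x)) :=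
        ((hcont t).tendsto x).mono_left nhdsWithin_le_nhds
      refine ge_of_tendsto htend ?_
      filter_upwards [self_mem_nhdsWithin] with y hy
      obtain ⟨n, rfl⟩ := hy
      exact ciInf_le (by
        obtain ⟨b, hb⟩ := hbdd t
        exact ⟨b, fun r ⟨k, hk⟩ => hk ▸ hb ⟨u k, rfl⟩⟩) n
  have hm : Measurable (fun t => ⨅ x : X, g t x) := by
    have : Measurable (fun t => ⨅ n : ℕ, g t (u n)) :=
      Measurable.iInf fun n => hmeas (u n)
    simpa [funext hm_eq] using this
  exact measurableSet_eq_fun hg (hm.comp measurable_fst)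
end

section
/- Let (X_n) be a nonnegative supermartingale adapted to a filtration (𝓕_n) on a probability space. Then for every a > 0 and every n: ℙ(∃ m ≥ n, X_m ≥ a) ≤ 𝔼[X_n]/a (Ville's inequality). -/
/-!
Stop the process at the first time `τ` in `[n, N]` at which it reaches `[a, ∞)`. Optional
stopping for the supermartingale gives `𝔼[X_τ] ≤ 𝔼[X_n]`, and `X_τ ≥ a` on the event that the
level is reached before `N`, so Markov's inequality bounds that event by `𝔼[X_n] / a`. Letting
`N → ∞` gives the bound for the whole tail.
-/

open MeasureTheory Filter

namespace MeasureTheory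

variable {Ω : Type*} {m0 : MeasurableSpace Ω} {μ : Measure Ω} {ℱ : Filtration ℕ m0}
  {f : ℕ → Ω → ℝ}

theorem Supermartingale.integral_stoppedValue_le [IsFiniteMeasure μ]
    (hf : Supermartingale f ℱ μ) {τ : Ω → ℕ∞} (hτ : IsStoppingTime ℱ τ) {n N : ℕ}
    (hnτ : ∀ ω, n ≤ τ ω) (hτN : ∀ ω, τ ω ≤ N) :
    ∫ ω, stoppedValue f τ ω ∂μ ≤ ∫ ω, f n ω ∂μ := by
  have h := hf.neg.expected_stoppedValue_mono (isStoppingTime_const ℱ n) hτ hnτ hτN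
  have hneg : stoppedValue (-f) τ = -stoppedValue f τ := rfl
  rw [stoppedValue_const, hneg] at h
  simpa only [Pi.neg_apply, integral_neg, neg_le_neg_iff] using h

theorem Supermartingale.mul_measureReal_exists_ge_le_integral [IsFiniteMeasure μ]
    (hf : Supermartingale f ℱ μ) (hnonneg : ∀ n, 0 ≤ f n) {a : ℝ} (ha : 0 ≤ a) {n N : ℕ}
    (hnN : n ≤ N) :
    a * μ.real {ω | ∃ m ∈ Set.Icc n N, a ≤ f m ω} ≤ ∫ ω, f n ω ∂μ := by
  set τ : Ω → ℕ∞ := fun ω ↦ (hittingBtwn f (Set.Ici a) n N ω : ℕ)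
  have hτ : IsStoppingTime ℱ τ :=
    hf.stronglyAdapted.adapted.isStoppingTime_hittingBtwn measurableSet_Ici
  have hτN : ∀ ω, τ ω ≤ N := fun ω ↦ WithTop.coe_le_coe.mpr (hittingBtwn_le ω)
  have hnτ : ∀ ω, n ≤ τ ω := fun ω ↦ WithTop.coe_le_coe.mpr (le_hittingBtwn hnN ω)
  have hreach : {ω | ∃ m ∈ Set.Icc n N, a ≤ f m ω} ⊆ {ω | a ≤ stoppedValue f τ ω} :=
    fun ω hω ↦ stoppedValue_hittingBtwn_mem (s := Set.Ici a) hω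
  calc a * μ.real {ω | ∃ m ∈ Set.Icc n N, a ≤ f m ω}
      ≤ a * μ.real {ω | a ≤ stoppedValue f τ ω} :=
        mul_le_mul_of_nonneg_left (measureReal_mono hreach) ha
    _ ≤ ∫ ω, stoppedValue f τ ω ∂μ :=
        mul_meas_ge_le_integral_of_nonneg (Eventually.of_forall fun ω ↦ hnonneg _ ω)
          (integrable_stoppedValue ℕ hτ hf.integrable hτN) a
    _ ≤ ∫ ω, f n ω ∂μ := hf.integral_stoppedValue_le hτ hnτ hτN

theorem Supermartingale.measure_exists_ge_le_ofReal_integral_div [IsFiniteMeasure μ]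
    (hf : Supermartingale f ℱ μ) (hnonneg : ∀ n, 0 ≤ f n) {a : ℝ} (ha : 0 < a) {n N : ℕ}
    (hnN : n ≤ N) :
    μ {ω | ∃ m ∈ Set.Icc n N, a ≤ f m ω} ≤ ENNReal.ofReal ((∫ ω, f n ω ∂μ) / a) := by
  rw [← ofReal_measureReal]
  refine ENNReal.ofReal_le_ofReal ((le_div_iff₀ ha).2 ?_)
  rw [mul_comm]
  exact hf.mul_measureReal_exists_ge_le_integral hnonneg ha.le hnN

end MeasureTheory

theorem stmt_14 {Ω : Type*} {m0 : MeasurableSpace Ω} {μ : Measure Ω} [IsProbabilityMeasure μ]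
    (ℱ : Filtration ℕ m0) (f : ℕ → Ω → ℝ)
    (hf : Supermartingale f ℱ μ) (hnonneg : ∀ n, 0 ≤ f n) :
    ∀ a : ℝ, 0 < a → ∀ n : ℕ,
      μ {ω | ∃ m, n ≤ m ∧ a ≤ f m ω} ≤ ENNReal.ofReal ((∫ ω, f n ω ∂μ) / a) := by
  intro a ha n
  have htail : {ω | ∃ m, n ≤ m ∧ a ≤ f m ω} =
      ⋃ k, {ω | ∃ m ∈ Set.Icc n (n + k), a ≤ f m ω} := by
    ext ω
    simp only [Set.mem_ofPred_eq, Set.mem_iUnion, Set.mem_Icc]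
    constructor
    · rintro ⟨m, hnm, hm⟩
      exact ⟨m - n, m, ⟨hnm, by omega⟩, hm⟩
    · rintro ⟨k, m, ⟨hnm, -⟩, hm⟩
      exact ⟨m, hnm, hm⟩
  have hmono : Monotone fun k ↦ {ω | ∃ m ∈ Set.Icc n (n + k), a ≤ f m ω} :=
    fun k l hkl ω ⟨m, ⟨hnm, hmk⟩, hm⟩ ↦ ⟨m, ⟨hnm, hmk.trans (by omega)⟩, hm⟩
  rw [htail, hmono.measure_iUnion]
  exact iSup_le fun k ↦
    hf.measure_exists_ge_le_ofReal_integral_div hnonneg ha (Nat.le_add_right n k)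
end

section
/- Let X be a real Hilbert space, F : X → ℝ convex, lower semicontinuous, and L-Lipschitz, x* a minimizer of F, and (x_n) a sequence satisfying ‖x_{n+1} − x*‖² ≤ ‖x_n − x*‖² − 2t_n(F(x_n) − F(x*)) + L²t_n² for all n, where t_n > 0, ∑t_n = ∞ and ∑t_n² < ∞. Then liminf F(x_n) = F(x*) and (‖x_n − x*‖) converges; in particular (x_n) is bounded. -/
open Filter

theorem stmt_18 {X : Type*} [NormedAddCommGroup X] [InnerProductSpace ℝ X] [CompleteSpace X]
    (F : X → ℝ) (L : ℝ) (hL : 0 < L)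
    (hconvex : ConvexOn ℝ Set.univ F) (hlsc : LowerSemicontinuous F)
    (hlip : LipschitzWith (Real.toNNReal L) F)
    (xs : X) (hxs : ∀ y : X, F xs ≤ F y)
    (x : ℕ → X) (t : ℕ → ℝ) (ht : ∀ n, 0 < t n)
    (hdiv : Tendsto (fun n => ∑ k ∈ Finset.range n, t k) atTop atTop)
    (hsq : Summable (fun n => t n ^ 2))
    (hrec : ∀ n, ‖x (n + 1) - xs‖ ^ 2 ≤
      ‖x n - xs‖ ^ 2 - 2 * t n * (F (x n) - F xs) + L ^ 2 * t n ^ 2) :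
    Filter.liminf (fun n => F (x n)) atTop = F xs ∧
      (∃ l : ℝ, Tendsto (fun n => ‖x n - xs‖) atTop (nhds l)) ∧
      ∃ C : ℝ, ∀ n, ‖x n‖ ≤ C := by
  set a : ℕ → ℝ := fun n => ‖x n - xs‖ ^ 2 with ha
  set g : ℕ → ℝ := fun n => t n * (F (x n) - F xs) with hg
  have hgnn : ∀ n, 0 ≤ g n := fun n =>
    mul_nonneg (ht n).le (sub_nonneg.2 (hxs (x n)))
  have hann : ∀ n, 0 ≤ a n := fun n => sq_nonneg _
  set S : ℝ := ∑' n, t n ^ 2 with hS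
  have hpartS : ∀ n, ∑ k ∈ Finset.range n, t k ^ 2 ≤ S := fun n =>
    Summable.sum_le_tsum _ (fun i _ => sq_nonneg _) hsq
  -- key partial sum inequality
  have key : ∀ n, a n + 2 * ∑ k ∈ Finset.range n, g k ≤
      a 0 + L ^ 2 * ∑ k ∈ Finset.range n, t k ^ 2 := by
    intro n
    induction n with
    | zero => simp
    | succ n ih =>
      have h := hrec n
      rw [Finset.sum_range_succ, Finset.sum_range_succ]
      have : a (n + 1) ≤ a n - 2 * g n + L ^ 2 * t n ^ 2 := by
        simpa [ha, hg, mul_assoc] using h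
      nlinarith
  -- summability of g
  have hgsum : Summable g := by
    apply summable_of_sum_range_le hgnn (c := (a 0 + L ^ 2 * S) / 2)
    intro n
    have h1 := key n
    have h2 := hpartS n
    have h3 := hann n
    nlinarith [sq_nonneg L]
  -- convergence of a
  have hconv : ∃ l0 : ℝ, Tendsto a atTop (nhds l0) := by
    set e : ℕ → ℝ := fun n => a n - L ^ 2 * ∑ k ∈ Finset.range n, t k ^ 2 with he
    have hanti : Antitone e := by
      apply antitone_nat_of_succ_le
      intro n
      have h := hrec n
      have hgn : 0 ≤ t n * (F (x n) - F xs) := hgnn n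
      simp only [he, ha, Finset.sum_range_succ]
      nlinarith
    have hbdd : BddBelow (Set.range e) := by
      refine ⟨-(L ^ 2 * S), ?_⟩
      rintro _ ⟨n, rfl⟩
      have h1 := hpartS n
      have h2 := hann n
      simp only [he]
      nlinarith [sq_nonneg L]
    have h1 : Tendsto e atTop (nhds (⨅ n, e n)) := tendsto_atTop_ciInf hanti hbdd
    have h2 : Tendsto (fun n => L ^ 2 * ∑ k ∈ Finset.range n, t k ^ 2) atTop
        (nhds (L ^ 2 * S)) := (hsq.hasSum.tendsto_sum_nat).const_mul _
    refine ⟨(⨅ n, e n) + L ^ 2 * S, ?_⟩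
    have : a = fun n => e n + L ^ 2 * ∑ k ∈ Finset.range n, t k ^ 2 := by
      funext n; simp [he]
    rw [this]
    exact h1.add h2
  obtain ⟨l0, hl0⟩ := hconv
  -- norm convergence
  have hnormconv : Tendsto (fun n => ‖x n - xs‖) atTop (nhds (Real.sqrt l0)) := by
    have : (fun n => ‖x n - xs‖) = fun n => Real.sqrt (a n) := by
      funext n; rw [ha]; exact (Real.sqrt_sq (norm_nonneg _)).symm
    rw [this]
    exact hl0.sqrt
  -- boundedness
  have habd : ∀ n, a n ≤ a 0 + L ^ 2 * S := by
    intro n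
    have h1 := key n
    have h2 := hpartS n
    have h3 : 0 ≤ ∑ k ∈ Finset.range n, g k := Finset.sum_nonneg fun i _ => hgnn i
    nlinarith [sq_nonneg L]
  have hCbd : ∀ n, ‖x n‖ ≤ ‖xs‖ + Real.sqrt (a 0 + L ^ 2 * S) := by
    intro n
    have h1 : ‖x n - xs‖ ≤ Real.sqrt (a 0 + L ^ 2 * S) := by
      rw [show ‖x n - xs‖ = Real.sqrt (a n) from (Real.sqrt_sq (norm_nonneg _)).symm]
      exact Real.sqrt_le_sqrt (habd n)
    calc ‖x n‖ = ‖xs + (x n - xs)‖ := by congr 1; abel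
      _ ≤ ‖xs‖ + ‖x n - xs‖ := norm_add_le _ _
      _ ≤ ‖xs‖ + Real.sqrt (a 0 + L ^ 2 * S) := by linarith
  -- liminf
  have hFbd : ∀ n, F (x n) ≤ F xs + L * Real.sqrt (a 0 + L ^ 2 * S) := by
    intro n
    have h := hlip.dist_le_mul (x n) xs
    rw [Real.coe_toNNReal _ hL.le] at h
    have h1 : ‖x n - xs‖ ≤ Real.sqrt (a 0 + L ^ 2 * S) := by
      rw [show ‖x n - xs‖ = Real.sqrt (a n) from (Real.sqrt_sq (norm_nonneg _)).symm]
      exact Real.sqrt_le_sqrt (habd n)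
    have h2 : dist (F (x n)) (F xs) ≤ L * Real.sqrt (a 0 + L ^ 2 * S) := by
      calc dist (F (x n)) (F xs) ≤ L * dist (x n) xs := h
        _ ≤ L * Real.sqrt (a 0 + L ^ 2 * S) := by
            rw [dist_eq_norm]; exact mul_le_mul_of_nonneg_left h1 hL.le
    have := abs_le.1 (by rwa [Real.dist_eq] at h2) |>.2
    linarith
  have hbu : IsBoundedUnder (· ≤ ·) atTop (fun n => F (x n)) :=
    Filter.isBoundedUnder_of ⟨F xs + L * Real.sqrt (a 0 + L ^ 2 * S), hFbd⟩
  have hbl : IsBoundedUnder (· ≥ ·) atTop (fun n => F (x n)) :=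
    Filter.isBoundedUnder_of ⟨F xs, fun n => hxs (x n)⟩
  have hliminf : liminf (fun n => F (x n)) atTop = F xs := by
    apply le_antisymm
    · apply le_of_forall_pos_le_add
      intro ε hε
      apply liminf_le_of_frequently_le _ hbl
      rw [frequently_atTop]
      by_contra hcon
      push_neg at hcon
      obtain ⟨N, hN⟩ := hcon
      -- eventually F (x n) > F xs + ε, hence t summable, contradiction
      have hts : Summable t := by
        have h1 : Summable (fun n => g (n + N)) := (summable_nat_add_iff N).2 hgsum
        have h2 : Summable (fun n => t (n + N)) := by
          have h3 : ∀ n, ε * t (n + N) ≤ g (n + N) := by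
            intro n
            have := hN (n + N) (by omega)
            have := (ht (n + N)).le
            have : ε ≤ F (x (n + N)) - F xs := by
              have := hN (n + N) (by omega); linarith
            show ε * t (n + N) ≤ t (n + N) * (F (x (n + N)) - F xs)
            nlinarith [(ht (n + N)).le]
          have h4 : Summable (fun n => ε * t (n + N)) :=
            Summable.of_nonneg_of_le (fun n => mul_nonneg hε.le (ht _).le) h3 h1
          have := h4.div_const ε
          simpa [mul_div_cancel_left₀ _ (ne_of_gt hε)] using this
        exact (summable_nat_add_iff N).1 h2
      exact not_tendsto_atTop_of_tendsto_nhds hts.hasSum.tendsto_sum_nat hdiv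
    · exact le_liminf_of_le hbu.isCoboundedUnder_ge
        (Eventually.of_forall fun n => hxs (x n))
  exact ⟨hliminf, ⟨Real.sqrt l0, hnormconv⟩, ⟨_, hCbd⟩⟩
end
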